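/- Let R be a Noetherian local ring, A a module-finite local R-algebra, M a finitely generated A-module, and N = A·M_n the A-submodule of M generated by the largest R-submodule M_n of dimension ≤ n. Then dim_R N ≤ n, i.e., every associated prime p of N over R satisfies dim R/p ≤ n. -/

import Mathlib

open IsLocalRing

/-- The (Krull) dimension of a module: `dim_R M = dim (R / ann_R M)`;
the zero module has dimension `⊥` (i.e. `-∞`). -/
noncomputable def moduleDim (R : Type*) [CommRing R] (M : Type*) [AddCommGroup M]
    [Module R M] : WithBot ℕ∞ :=
  ringKrullDim (R ⧸ Module.annihilator R M)

/-- `dimLe d n` means `d ≤ n` where `n : ℤ` and `d` is a dimension in `WithBot ℕ∞`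
(so for `n < 0` this means `d = ⊥`, i.e. the module is zero). -/
def dimLe (d : WithBot ℕ∞) (n : ℤ) : Prop :=
  if 0 ≤ n then d ≤ ((n.toNat : ℕ∞) : WithBot ℕ∞) else d = ⊥

/-- The depth of a module over a Noetherian local ring: the supremum of lengths of
regular sequences on `M` contained in the maximal ideal. -/
noncomputable def moduleDepth (R : Type*) [CommRing R] [IsLocalRing R] (M : Type*)
    [AddCommGroup M] [Module R M] : ℕ∞ :=
  sSup {n : ℕ∞ | ∃ rs : List R, (rs.length : ℕ∞) = n ∧
    (∀ r ∈ rs, r ∈ maximalIdeal R) ∧ RingTheory.Sequence.IsRegular M rs}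

/-- A module over a Noetherian local ring is Cohen-Macaulay if it is zero or
`depth M = dim M`. -/
def IsCMModule (R : Type*) [CommRing R] [IsLocalRing R] (M : Type*) [AddCommGroup M]
    [Module R M] : Prop :=
  Nontrivial M → (moduleDepth R M : WithBot ℕ∞) = moduleDim R M

/-- A module over a (not necessarily local) commutative ring is Cohen-Macaulay if all its
localizations at primes are Cohen-Macaulay. -/
def IsCMModuleGen (R : Type*) [CommRing R] (M : Type*) [AddCommGroup M] [Module R M] : Prop :=
  ∀ (P : Ideal R) [P.IsPrime],
    IsCMModule (Localization.AtPrime P) (LocalizedModule P.primeCompl M)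

/-- `D : Fin (ℓ+1) → Submodule R M` is the dimension filtration of `M`:
`D 0 = 0`, `D ℓ = M`, the chain is strictly increasing, each `D i` (for `i ≥ 1`) is the
largest submodule of its dimension, and every nonzero submodule which is largest among
submodules of dimension at most its own dimension occurs in the chain. -/
def IsDimFiltration (R : Type*) [CommRing R] (M : Type*) [AddCommGroup M] [Module R M]
    (ℓ : ℕ) (D : Fin (ℓ + 1) → Submodule R M) : Prop :=
  D 0 = ⊥ ∧ D (Fin.last ℓ) = ⊤ ∧ StrictMono D ∧
  (∀ i : Fin ℓ, IsGreatest
    {N : Submodule R M | moduleDim R ↥N ≤ moduleDim R ↥(D i.succ)} (D i.succ)) ∧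
  (∀ N : Submodule R M, N ≠ ⊥ →
    IsGreatest {N' : Submodule R M | moduleDim R ↥N' ≤ moduleDim R ↥N} N → ∃ i, D i = N)

/-- A module over a local ring is sequentially Cohen-Macaulay if the consecutive quotients
of its dimension filtration are Cohen-Macaulay. -/
def IsSeqCM (R : Type*) [CommRing R] [IsLocalRing R] (M : Type*) [AddCommGroup M]
    [Module R M] : Prop :=
  ∃ (ℓ : ℕ) (D : Fin (ℓ + 1) → Submodule R M), IsDimFiltration R M ℓ D ∧
    ∀ i : Fin ℓ, IsCMModule R
      (↥(D i.succ) ⧸ (D i.castSucc).comap (D i.succ).subtype)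

/-- Sequentially Cohen-Macaulay over a not necessarily local ring. -/
def IsSeqCMGen (R : Type*) [CommRing R] (M : Type*) [AddCommGroup M] [Module R M] : Prop :=
  ∃ (ℓ : ℕ) (D : Fin (ℓ + 1) → Submodule R M), IsDimFiltration R M ℓ D ∧
    ∀ i : Fin ℓ, IsCMModuleGen R
      (↥(D i.succ) ⧸ (D i.castSucc).comap (D i.succ).subtype)

/-- A local ring is sequentially Cohen-Macaulay if it is so as a module over itself. -/
def IsSeqCMRing (R : Type*) [CommRing R] [IsLocalRing R] : Prop := IsSeqCM R R

/-! Multiplication by `a ∈ A` is `R`-linear, so `a • Mₙ` is an `R`-linear image of `Mₙ` and has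
dimension at most `dim_R Mₙ ≤ n`; by maximality `a • Mₙ ⊆ Mₙ`. Thus `Mₙ` is already an
`A`-submodule and `A · Mₙ = Mₙ`. -/

theorem dimLe_of_le {d d' : WithBot ℕ∞} {n : ℤ} (h : d ≤ d') (h' : dimLe d' n) :
    dimLe d n := by
  unfold dimLe at *
  split_ifs at h' ⊢
  · exact h.trans h'
  · exact le_bot_iff.mp (h' ▸ h)

section

variable {R : Type*} [CommRing R] {M : Type*} [AddCommGroup M] [Module R M]

theorem moduleDim_le_of_surjective {X : Type*} [AddCommGroup X] [Module R X] (f : X →ₗ[R] M)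
    (hf : Function.Surjective f) : moduleDim R M ≤ moduleDim R X := by
  have hann : Module.annihilator R X ≤ Module.annihilator R M := by
    intro r hr
    rw [Module.mem_annihilator] at hr ⊢
    intro y
    obtain ⟨x, rfl⟩ := hf y
    rw [← map_smul, hr x, map_zero]
  exact ringKrullDim_le_of_surjective (Ideal.Quotient.factor hann)
    (Ideal.Quotient.factor_surjective hann)

theorem range_le_of_isGreatest_dimLe {n : ℤ} {Mn : Submodule R M}
    (hMn : IsGreatest {N : Submodule R M | dimLe (moduleDim R N) n} Mn) (f : Mn →ₗ[R] M) :
    LinearMap.range f ≤ Mn :=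
  hMn.2 <| dimLe_of_le
    (moduleDim_le_of_surjective f.rangeRestrict f.surjective_rangeRestrict) hMn.1

variable {A : Type*} [Semiring A] [Algebra R A] [Module A M] [IsScalarTower R A M]

theorem smul_mem_of_isGreatest_dimLe {n : ℤ} {Mn : Submodule R M}
    (hMn : IsGreatest {N : Submodule R M | dimLe (moduleDim R N) n} Mn) (a : A) {x : M}
    (hx : x ∈ Mn) : a • x ∈ Mn :=
  range_le_of_isGreatest_dimLe hMn (DistribSMul.toLinearMap R M a ∘ₗ Mn.subtype)
    ⟨⟨x, hx⟩, rfl⟩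

theorem Submodule.restrictScalars_span_eq_of_smul_mem {p : Submodule R M}
    (hp : ∀ (a : A) {x : M}, x ∈ p → a • x ∈ p) : (span A (p : Set M)).restrictScalars R = p :=
  le_antisymm
    (fun _ hx ↦ span_induction (fun _ hy ↦ hy) p.zero_mem (fun _ _ _ _ ↦ p.add_mem)
      (fun a _ _ hy ↦ hp a hy) hx)
    subset_span

end

theorem stmt19_general (R : Type*) [CommRing R]
    (A : Type*) [CommRing A]
    [Algebra R A]
    (M : Type*) [AddCommGroup M] [Module A M]
    [Module R M] [IsScalarTower R A M] (n : ℤ)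
    (Mn : Submodule R M)
    (hMn : IsGreatest {N : Submodule R M | dimLe (moduleDim R ↥N) n} Mn) :
    dimLe (moduleDim R ↥((Submodule.span A (Mn : Set M)).restrictScalars R)) n := by
  rw [Submodule.restrictScalars_span_eq_of_smul_mem (smul_mem_of_isGreatest_dimLe hMn)]
  exact hMn.1

/-- If `Mₙ` is the largest `R`-submodule of `M` with `dim_R Mₙ ≤ n`, then the
`A`-submodule `N = A · Mₙ` of `M` generated by `Mₙ` also satisfies `dim_R N ≤ n`. -/
theorem stmt19 (R : Type*) [CommRing R] [IsNoetherianRing R] [IsLocalRing R]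
    (A : Type*) [CommRing A] [IsNoetherianRing A] [IsLocalRing A]
    [Algebra R A] [Module.Finite R A]
    (M : Type*) [AddCommGroup M] [Module A M] [Module.Finite A M]
    [Module R M] [IsScalarTower R A M] (n : ℤ)
    (Mn : Submodule R M)
    (hMn : IsGreatest {N : Submodule R M | dimLe (moduleDim R ↥N) n} Mn) :
    dimLe (moduleDim R ↥((Submodule.span A (Mn : Set M)).restrictScalars R)) n :=
  stmt19_general R A M n Mn hMn
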